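/- Let p be a prime, L a field of characteristic p, and f ∈ m = (x_1,…,x_n) ⊂ L[x_1,…,x_n] with p^L·fpt(f) ∈ ℕ for some L ∈ ℕ. Then for any g ∈ m: fpt(f+g) ≤ fpt(f) if and only if (f+g)^{p^L·fpt(f)} ∈ (x_1^{p^L},…,x_n^{p^L}). -/

import Mathlib

open MvPolynomial

/-- The `e`-th truncation of the non-terminating base `p` expansion of `α ∈ (0,1]`:
the unique multiple of `p^{-e}` with `⟨α⟩_e < α ≤ ⟨α⟩_e + p^{-e}`
(with the convention `⟨α⟩_e = 0` for `α ≤ 0`). -/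
noncomputable def trunc (p e : ℕ) (α : ℝ) : ℝ :=
  if α ≤ 0 then 0 else (⌈α * (p : ℝ) ^ e⌉ - 1) / (p : ℝ) ^ e

/-- The `e`-th digit (`e ≥ 1`) of the non-terminating base `p` expansion of `α ∈ (0,1]`,
namely `p^e ⟨α⟩_e - p^e ⟨α⟩_{e-1}`. -/
noncomputable def digit (p e : ℕ) (α : ℝ) : ℤ :=
  (⌈α * (p : ℝ) ^ e⌉ - 1) - p * (⌈α * (p : ℝ) ^ (e - 1)⌉ - 1)

/-- Least positive residue of `m` modulo `b`: the unique `r` with `1 ≤ r ≤ b`, `r ≡ m (mod b)`. -/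
def lpr (m b : ℤ) : ℤ := if m % b = 0 then b else m % b

/-- The `e`-th Frobenius power `m^{[p^e]} = (x_1^{p^e}, …, x_n^{p^e})`. -/
noncomputable def frobPow (p n : ℕ) (K : Type*) [Field K] (e : ℕ) :
    Ideal (MvPolynomial (Fin n) K) :=
  Ideal.span (Set.range fun i => (X i : MvPolynomial (Fin n) K) ^ p ^ e)

/-- `ν_f(p^e) = max { N | f^N ∉ m^{[p^e]} }`. -/
noncomputable def nu (p : ℕ) {n : ℕ} {K : Type*} [Field K]
    (f : MvPolynomial (Fin n) K) (e : ℕ) : ℕ :=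
  sSup {N : ℕ | f ^ N ∉ frobPow p n K e}

/-- The F-pure threshold `fpt(f) = lim_e ν_f(p^e)/p^e`; since the sequence is
non-decreasing and bounded, the limit equals the supremum. -/
noncomputable def fpt (p : ℕ) {n : ℕ} {K : Type*} [Field K]
    (f : MvPolynomial (Fin n) K) : ℝ :=
  ⨆ e : ℕ, (nu p f e : ℝ) / (p : ℝ) ^ e

/-- The maximal ideal `m = (x_1, …, x_n)`. -/
noncomputable def mIdeal (n : ℕ) (K : Type*) [Field K] : Ideal (MvPolynomial (Fin n) K) :=
  Ideal.span (Set.range (X : Fin n → MvPolynomial (Fin n) K))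

/-!
Frobenius powers are compatible with the Frobenius: if `P ∉ m^[p^e]` and `Q ∉ m^[p^s]`, then
`P^(p^s) Q ∉ m^[p^(e+s)]`, as the coefficient of `p^s μ + ν` shows once `μ` is taken minimal in the
support of `P` below a monomial with all exponents `< p^e`. Consequently
`ν_h(p^(e+s)) ≥ p^s ν_h(p^e) + b` whenever `h^b ∉ m^[p^s]`.

Write `h = f + g`, and recall `fpt f = N / p^L`. If `h^N ∉ m^[p^L]`, the case `b = 1` gives
`ν_h(p^(L+s)) > p^s N` for large `s`, so `fpt h > fpt f`. If `h^N ∈ m^[p^L]`, then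
`h^(N p^e) ∈ m^[p^(L+e)]`, and with the case `b = 0` this gives `p^L ν_h(p^e) < N p^e` for every `e`,
so `fpt h ≤ fpt f`.
-/

namespace MvPolynomial

variable {σ R : Type*} [CommSemiring R] (p : ℕ) [ExpChar R p]

theorem coeff_smul_pow_expChar_pow (φ : MvPolynomial σ R) (s : ℕ) (m : σ →₀ ℕ) :
    coeff (p ^ s • m) (φ ^ p ^ s) = coeff m φ ^ p ^ s := by
  rw [← map_iterateFrobenius_expand, coeff_map,
    coeff_expand_smul _ (pow_ne_zero s (expChar_ne_zero R p)), iterateFrobenius_def]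

theorem support_pow_expChar_pow_subset [DecidableEq σ] (φ : MvPolynomial σ R) (s : ℕ) :
    (φ ^ p ^ s).support ⊆ φ.support.image (p ^ s • ·) := by
  rw [← map_iterateFrobenius_expand]
  exact (support_map_subset _ _).trans (support_expand_subset _)

theorem coeff_pow_expChar_pow_mul_of_minimal {φ ψ : MvPolynomial σ R} {μ ν : σ →₀ ℕ} {s : ℕ}
    (hμ : Minimal (· ∈ φ.support) μ) (hν : ∀ i, ν i < p ^ s) :
    coeff (p ^ s • μ + ν) (φ ^ p ^ s * ψ) = coeff μ φ ^ p ^ s * coeff ν ψ := by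
  classical
  rw [coeff_mul, Finset.sum_eq_single_of_mem (p ^ s • μ, ν) (by simp),
    coeff_smul_pow_expChar_pow]
  rintro ⟨u, w⟩ huw hne
  rw [Finset.HasAntidiagonal.mem_antidiagonal] at huw
  dsimp only at huw ⊢
  by_contra hcoeff
  obtain ⟨τ, hτ, rfl⟩ := Finset.mem_image.1 <| support_pow_expChar_pow_subset p φ s <|
    mem_support_iff.2 (left_ne_zero_of_mul hcoeff)
  -- `p ^ s • τ ≤ p ^ s • μ + ν` with `ν < p ^ s` pointwise forces `τ ≤ μ`
  have hτμ : τ ≤ μ := fun i => by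
    have hi := DFunLike.congr_fun huw i
    simp only [Finsupp.add_apply, Finsupp.smul_apply, smul_eq_mul] at hi
    have : p ^ s * τ i < p ^ s * (μ i + 1) := by linarith [hν i]
    exact Nat.lt_succ_iff.1 (Nat.lt_of_mul_lt_mul_left this)
  obtain rfl := hμ.eq_of_le hτ hτμ
  exact hne (by simp [add_left_cancel huw])

end MvPolynomial

section FrobeniusPower

variable {p n : ℕ} {K : Type*} [Field K]

theorem mem_frobPow_iff {z : MvPolynomial (Fin n) K} {e : ℕ} :
    z ∈ frobPow p n K e ↔ ∀ m ∈ z.support, ∃ i, p ^ e ≤ m i := by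
  have hrange : (Set.range fun i => (X i : MvPolynomial (Fin n) K) ^ p ^ e)
      = (monomial · 1) '' Set.range fun i => Finsupp.single i (p ^ e) := by
    rw [← Set.range_comp]
    simp [Function.comp_def, X_pow_eq_monomial]
  rw [frobPow, hrange, mem_ideal_span_monomial_image]
  simp [Finsupp.single_le_iff]

theorem notMem_frobPow_iff {z : MvPolynomial (Fin n) K} {e : ℕ} :
    z ∉ frobPow p n K e ↔ ∃ m ∈ z.support, ∀ i, m i < p ^ e := by
  simp [mem_frobPow_iff]

theorem one_notMem_frobPow (hp : p ≠ 0) (e : ℕ) : (1 : MvPolynomial (Fin n) K) ∉ frobPow p n K e :=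
  notMem_frobPow_iff.2 ⟨0, by simp, fun _ => pow_pos (Nat.pos_of_ne_zero hp) e⟩

theorem exists_notMem_frobPow (hp : 1 < p) {z : MvPolynomial (Fin n) K} (hz : z ≠ 0) :
    ∃ e, z ∉ frobPow p n K e := by
  obtain ⟨m, hm⟩ := support_nonempty.2 hz
  refine ⟨∑ i, m i, notMem_frobPow_iff.2 ⟨m, hm, fun i => ?_⟩⟩
  calc m i ≤ ∑ j, m j := Finset.single_le_sum (fun _ _ => Nat.zero_le _) (Finset.mem_univ i)
    _ < p ^ ∑ j, m j := Nat.lt_pow_self hp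

variable [ExpChar K p]

theorem pow_mem_frobPow_add {z : MvPolynomial (Fin n) K} {e : ℕ} (hz : z ∈ frobPow p n K e)
    (s : ℕ) : z ^ p ^ s ∈ frobPow p n K (e + s) := by
  classical
  rw [mem_frobPow_iff] at hz ⊢
  intro m' hm'
  obtain ⟨m, hm, rfl⟩ := Finset.mem_image.1 (support_pow_expChar_pow_subset p z s hm')
  obtain ⟨i, hi⟩ := hz m hm
  exact ⟨i, by simpa [pow_add, mul_comm (p ^ e)] using Nat.mul_le_mul_left (p ^ s) hi⟩

theorem pow_mul_notMem_frobPow_add {P Q : MvPolynomial (Fin n) K} {e s : ℕ}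
    (hP : P ∉ frobPow p n K e) (hQ : Q ∉ frobPow p n K s) :
    P ^ p ^ s * Q ∉ frobPow p n K (e + s) := by
  obtain ⟨m, hm, hm_lt⟩ := notMem_frobPow_iff.1 hP
  obtain ⟨μ, hμm, hμ⟩ := exists_minimal_le_of_wellFoundedLT (· ∈ P.support) m hm
  obtain ⟨ν, hν, hν_lt⟩ := notMem_frobPow_iff.1 hQ
  refine notMem_frobPow_iff.2 ⟨p ^ s • μ + ν, ?_, fun i => ?_⟩
  · rw [mem_support_iff, coeff_pow_expChar_pow_mul_of_minimal p hμ hν_lt]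
    exact mul_ne_zero (pow_ne_zero _ (mem_support_iff.1 hμ.prop)) (mem_support_iff.1 hν)
  · calc p ^ s * μ i + ν i < p ^ s * (μ i + 1) := by linarith [hν_lt i]
      _ ≤ p ^ s * p ^ e := Nat.mul_le_mul_left _ ((hμm i).trans_lt (hm_lt i))
      _ = p ^ (e + s) := by rw [pow_add, mul_comm]

end FrobeniusPower

section Threshold

variable {p n : ℕ} {K : Type*} [Field K] {h : MvPolynomial (Fin n) K}

theorem mem_upperBounds_setOf_pow_notMem_frobPow (hh : h ∈ mIdeal n K) (e : ℕ) :
    n * p ^ e ∈ upperBounds {N : ℕ | h ^ N ∉ frobPow p n K e} := by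
  intro N hN
  obtain ⟨m, hm, hm_lt⟩ := notMem_frobPow_iff.1 hN
  calc N ≤ m.degree := (mem_pow_idealOfVars_iff N _).1 (Ideal.pow_mem_pow hh N) m hm
    _ = ∑ i, m i := m.degree_eq_sum
    _ ≤ ∑ _i : Fin n, p ^ e := Finset.sum_le_sum fun i _ => (hm_lt i).le
    _ = n * p ^ e := by simp

theorem nu_le (hh : h ∈ mIdeal n K) (e : ℕ) : nu p h e ≤ n * p ^ e :=
  csSup_le' (mem_upperBounds_setOf_pow_notMem_frobPow hh e)

theorem le_nu_iff (hp : p ≠ 0) (hh : h ∈ mIdeal n K) {e N : ℕ} :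
    N ≤ nu p h e ↔ h ^ N ∉ frobPow p n K e := by
  have hbdd := mem_upperBounds_setOf_pow_notMem_frobPow (p := p) hh e
  refine ⟨fun hN hmem => ?_, fun hN => le_csSup ⟨_, hbdd⟩ hN⟩
  have hnu : h ^ nu p h e ∉ frobPow p n K e :=
    Nat.sSup_mem ⟨0, by simpa using one_notMem_frobPow hp e⟩ ⟨_, hbdd⟩
  exact hnu (by rw [← Nat.add_sub_cancel' hN, pow_add]; exact Ideal.mul_mem_right _ _ hmem)

theorem nu_div_pow_le_fpt (hh : h ∈ mIdeal n K) (e : ℕ) :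
    (nu p h e : ℝ) / (p : ℝ) ^ e ≤ fpt p h := by
  refine le_ciSup (f := fun e : ℕ => (nu p h e : ℝ) / (p : ℝ) ^ e) ⟨n, ?_⟩ e
  rintro _ ⟨e', rfl⟩
  refine div_le_of_le_mul₀ (by positivity) (by positivity) ?_
  exact_mod_cast nu_le hh e'

theorem fpt_pos (hp : 1 < p) (hh : h ∈ mIdeal n K) (h0 : h ≠ 0) : 0 < fpt p h := by
  obtain ⟨s, hs⟩ := exists_notMem_frobPow hp h0
  have hnu : 1 ≤ nu p h s := (le_nu_iff (by omega) hh).2 (by rwa [pow_one])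
  calc (0 : ℝ) < 1 / (p : ℝ) ^ s := by positivity
    _ ≤ (nu p h s : ℝ) / (p : ℝ) ^ s := by gcongr; exact_mod_cast hnu
    _ ≤ fpt p h := nu_div_pow_le_fpt hh s

variable [ExpChar K p]

theorem pow_mul_nu_add_le_nu (hh : h ∈ mIdeal n K) {b e s : ℕ} (hb : h ^ b ∉ frobPow p n K s) :
    p ^ s * nu p h e + b ≤ nu p h (e + s) := by
  have hp := expChar_ne_zero K p
  refine (le_nu_iff hp hh).2 ?_
  rw [pow_add, pow_mul']
  exact pow_mul_notMem_frobPow_add ((le_nu_iff hp hh).1 le_rfl) hb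

theorem lt_fpt_of_pow_notMem_frobPow (hp : 1 < p) (hh : h ∈ mIdeal n K) (h0 : h ≠ 0) {L N : ℕ}
    (hN : h ^ N ∉ frobPow p n K L) : (N : ℝ) / (p : ℝ) ^ L < fpt p h := by
  obtain ⟨s, hs⟩ := exists_notMem_frobPow hp h0
  have hnu : p ^ s * N + 1 ≤ nu p h (L + s) :=
    (Nat.add_le_add_right (Nat.mul_le_mul_left _ ((le_nu_iff (by omega) hh).2 hN)) 1).trans
      (pow_mul_nu_add_le_nu hh (by rwa [pow_one]))
  calc (N : ℝ) / (p : ℝ) ^ L = (p ^ s * N : ℕ) / (p : ℝ) ^ (L + s) := by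
        push_cast; rw [pow_add]; field_simp
    _ < (p ^ s * N + 1 : ℕ) / (p : ℝ) ^ (L + s) := by gcongr; omega
    _ ≤ (nu p h (L + s) : ℝ) / (p : ℝ) ^ (L + s) := by gcongr
    _ ≤ fpt p h := nu_div_pow_le_fpt hh _

theorem fpt_le_of_pow_mem_frobPow (hh : h ∈ mIdeal n K) {L N : ℕ}
    (hN : h ^ N ∈ frobPow p n K L) : fpt p h ≤ (N : ℝ) / (p : ℝ) ^ L := by
  have hp : p ≠ 0 := expChar_ne_zero K p
  refine ciSup_le fun e => ?_
  have hmem : h ^ (N * p ^ e) ∈ frobPow p n K (e + L) := by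
    rw [pow_mul, add_comm]; exact pow_mem_frobPow_add hN e
  have hmono : p ^ L * nu p h e ≤ nu p h (e + L) := by
    have h1 : h ^ 0 ∉ frobPow p n K L := by simpa using one_notMem_frobPow hp L
    simpa using pow_mul_nu_add_le_nu hh h1
  have hnu : nu p h (e + L) < N * p ^ e :=
    not_le.1 fun hle => (le_nu_iff hp hh).1 hle hmem
  rw [div_le_div_iff₀ (by positivity) (by positivity), mul_comm]
  exact_mod_cast (hmono.trans hnu.le)

end Threshold

/-- if `p^L·fpt(f) =: N ∈ ℕ`, then for `g ∈ m`,
`fpt(f+g) ≤ fpt(f) ↔ (f+g)^N ∈ m^{[p^L]}`. -/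
theorem stmt_13 (p : ℕ) (hp : p.Prime) (n : ℕ) (K : Type*) [Field K] [CharP K p]
    (f : MvPolynomial (Fin n) K) (hfm : f ∈ mIdeal n K) (hf0 : f ≠ 0)
    (L : ℕ) (N : ℕ) (hN : (N : ℝ) = (p : ℝ) ^ L * fpt p f)
    (g : MvPolynomial (Fin n) K) (hgm : g ∈ mIdeal n K) :
    fpt p (f + g) ≤ fpt p f ↔ (f + g) ^ N ∈ frobPow p n K L := by
  have : ExpChar K p := ExpChar.prime hp
  have hfgm : f + g ∈ mIdeal n K := add_mem hfm hgm
  have hpL : (0 : ℝ) < (p : ℝ) ^ L := by have := hp.pos; positivity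
  have hfpt : fpt p f = N / (p : ℝ) ^ L := by rw [hN]; field_simp
  have hN0 : N ≠ 0 := by
    rintro rfl
    simpa [hfpt] using fpt_pos hp.one_lt hfm hf0
  constructor
  · intro hle
    by_contra hmem
    have hfg0 : f + g ≠ 0 := by
      rintro hfg0
      rw [hfg0, zero_pow hN0] at hmem
      exact hmem (zero_mem _)
    exact (lt_fpt_of_pow_notMem_frobPow hp.one_lt hfgm hfg0 hmem).not_ge (hfpt ▸ hle)
  · intro hmem
    exact hfpt ▸ fpt_le_of_pow_mem_frobPow hfgm hmem
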